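/- arXiv:1911.00166 — 2 statements merged into one kernel-verified Lean document; each statement's English description precedes it below -/
import Mathlib

section
/- Let r ≤ min(N,T), let R ∈ ℝ^{N×r} and S ∈ ℝ^{T×r} have orthonormal columns, and let P(W) := RR′W + WSS′ − RR′WSS′. Suppose Δ ∈ ℝ^{N×T} and c ≥ 0 satisfy the cone inequality ‖Δ‖_* ≤ 4‖P(Δ)‖_* + c. Then (1/(4√(3r)))·( ‖Δ‖_* − c ) ≤ ‖Δ‖_F ≤ ‖Δ‖_*; in particular, when c/‖Δ‖_* = o(1), the nuclear norm and the Frobenius norm of Δ are of the same order. (Equation (9): equivalence of nuclear and Frobenius norms on the restricted cone) -/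
/-!
`P(X) = X − (I − RRᵀ)X(I − SSᵀ)` removes from `X` its orthogonal projection onto the
complement of both column spaces, so `‖P(Δ)‖_F ≤ ‖Δ‖_F` by Pythagoras; and `P(Δ)` is a sum of
two matrices of rank at most `r`. Cauchy–Schwarz over the nonzero singular values then gives
`‖P(Δ)‖_* ≤ √(2r)‖P(Δ)‖_F ≤ √(3r)‖Δ‖_F`, which the cone inequality turns into the lower bound.
The upper bound is `√(∑ σₖ²) ≤ ∑ σₖ`.
-/

open Matrix

noncomputable section

/-- Squared Frobenius norm. -/
def frobSq {N T : ℕ} (A : Matrix (Fin N) (Fin T) ℝ) : ℝ := ∑ i, ∑ t, (A i t) ^ 2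

/-- Frobenius norm. -/
def frob {N T : ℕ} (A : Matrix (Fin N) (Fin T) ℝ) : ℝ := Real.sqrt (frobSq A)

/-- Nuclear norm: the sum of the singular values (the square roots of the
eigenvalues of `AᵀA`). -/
def nuclearNorm {N T : ℕ} (A : Matrix (Fin N) (Fin T) ℝ) : ℝ :=
  ∑ k, Real.sqrt ((Matrix.isHermitian_conjTranspose_mul_self A).eigenvalues k)

/-- The map `P(W) = RR′W + WSS′ − RR′WSS′`. -/
def projPhi {N T r : ℕ} (R : Matrix (Fin N) (Fin r) ℝ) (S : Matrix (Fin T) (Fin r) ℝ)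
    (W : Matrix (Fin N) (Fin T) ℝ) : Matrix (Fin N) (Fin T) ℝ :=
  R * Rᵀ * W + W * (S * Sᵀ) - R * Rᵀ * W * (S * Sᵀ)

theorem Matrix.rank_add_le {m n K : Type*} [Fintype m] [Fintype n] [Field K]
    (A B : Matrix m n K) : (A + B).rank ≤ A.rank + B.rank := by
  rw [Matrix.rank, Matrix.mulVecLin_add]
  exact (Submodule.finrank_mono (LinearMap.range_add_le _ _)).trans
    (Submodule.finrank_add_le_finrank_add_finrank _ _)

theorem Matrix.isIdempotentElem_mul_transpose {m n R : Type*} [Fintype m] [Fintype n]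
    [DecidableEq n] [CommRing R] {A : Matrix m n R} (hA : Aᵀ * A = 1) :
    IsIdempotentElem (A * Aᵀ) := by
  rw [IsIdempotentElem, Matrix.mul_assoc, ← Matrix.mul_assoc Aᵀ, hA, Matrix.one_mul]

section FrobeniusNuclear

variable {N T : ℕ}

theorem frobSq_eq_trace (A : Matrix (Fin N) (Fin T) ℝ) : frobSq A = (Aᵀ * A).trace := by
  simp only [frobSq, trace, diag, mul_apply, transpose_apply, sq]
  exact Finset.sum_comm

theorem frobSq_add (U V : Matrix (Fin N) (Fin T) ℝ) :
    frobSq (U + V) = frobSq U + frobSq V + 2 * (Uᵀ * V).trace := by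
  simp only [frobSq_eq_trace, transpose_add, Matrix.add_mul, Matrix.mul_add, trace_add]
  rw [← trace_transpose (Vᵀ * U), transpose_mul, transpose_transpose]
  ring

theorem frobSq_nonneg (A : Matrix (Fin N) (Fin T) ℝ) : 0 ≤ frobSq A := by
  unfold frobSq; positivity

theorem sum_eigenvalues_conjTranspose_mul_self (A : Matrix (Fin N) (Fin T) ℝ) :
    ∑ k, (isHermitian_conjTranspose_mul_self A).eigenvalues k = frobSq A := by
  rw [frobSq_eq_trace, ← conjTranspose_eq_transpose_of_trivial,
    (isHermitian_conjTranspose_mul_self A).trace_eq_sum_eigenvalues]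
  rfl

theorem frob_le_nuclearNorm (A : Matrix (Fin N) (Fin T) ℝ) : frob A ≤ nuclearNorm A := by
  have heig := eigenvalues_conjTranspose_mul_self_nonneg A
  have hsq : frobSq A ≤ nuclearNorm A ^ 2 := by
    rw [← sum_eigenvalues_conjTranspose_mul_self, nuclearNorm]
    calc _ = ∑ k, √((isHermitian_conjTranspose_mul_self A).eigenvalues k) ^ 2 := by
          simp only [Real.sq_sqrt (heig _)]
      _ ≤ _ := Finset.sum_sq_le_sq_sum_of_nonneg fun _ _ => Real.sqrt_nonneg _
  exact (Real.sqrt_le_left (Finset.sum_nonneg fun _ _ => Real.sqrt_nonneg _)).2 hsq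

theorem nuclearNorm_le_sqrt_rank_mul_frob (A : Matrix (Fin N) (Fin T) ℝ) :
    nuclearNorm A ≤ √A.rank * frob A := by
  set hA := isHermitian_conjTranspose_mul_self A
  have heig := eigenvalues_conjTranspose_mul_self_nonneg A
  set s := Finset.univ.filter fun k => hA.eigenvalues k ≠ 0
  have hcard : (s.card : ℝ) = A.rank := by
    rw [← rank_conjTranspose_mul_self A, hA.rank_eq_card_non_zero_eigs, Fintype.card_subtype]
  have hnuc : nuclearNorm A = ∑ k ∈ s, √(hA.eigenvalues k) := by
    refine (Finset.sum_filter_of_ne fun k _ => mt fun h0 => ?_).symm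
    rw [h0, Real.sqrt_zero]
  rw [frob, ← Real.sqrt_mul (Nat.cast_nonneg _), ← hcard, hnuc]
  refine Real.le_sqrt_of_sq_le ?_
  calc (∑ k ∈ s, √(hA.eigenvalues k)) ^ 2
      ≤ s.card * ∑ k ∈ s, √(hA.eigenvalues k) ^ 2 := sq_sum_le_card_mul_sum_sq
    _ ≤ s.card * frobSq A := by
      rw [← sum_eigenvalues_conjTranspose_mul_self]
      gcongr
      simp only [Real.sq_sqrt (heig _)]
      exact Finset.sum_le_sum_of_subset_of_nonneg (Finset.filter_subset _ _) fun k _ _ => heig k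

end FrobeniusNuclear

theorem frobSq_eq_frobSq_sub_add_frobSq_of_isIdempotentElem {N T : ℕ}
    {E : Matrix (Fin N) (Fin N) ℝ} {F : Matrix (Fin T) (Fin T) ℝ}
    (hE : IsIdempotentElem E) (hEs : E.IsSymm) (hF : IsIdempotentElem F) (hFs : F.IsSymm)
    (X : Matrix (Fin N) (Fin T) ℝ) :
    frobSq X = frobSq (X - E * X * F) + frobSq (E * X * F) := by
  set Q := E * X * F
  have horth : ((X - Q)ᵀ * Q).trace = 0 := by
    have hQQ : Qᵀ * Q = F * (Xᵀ * Q) := by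
      simp only [Q, transpose_mul, hEs.eq, hFs.eq, Matrix.mul_assoc]
      rw [← Matrix.mul_assoc E E, hE.eq]
    rw [transpose_sub, Matrix.sub_mul, trace_sub, hQQ, trace_mul_comm F, Matrix.mul_assoc,
      Matrix.mul_assoc, hF.eq, sub_self]
  conv_lhs => rw [← sub_add_cancel X Q]
  rw [frobSq_add, horth, mul_zero, add_zero]

section ProjPhi

variable {N T r : ℕ} {R : Matrix (Fin N) (Fin r) ℝ} {S : Matrix (Fin T) (Fin r) ℝ}

theorem projPhi_eq_sub (R : Matrix (Fin N) (Fin r) ℝ) (S : Matrix (Fin T) (Fin r) ℝ)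
    (X : Matrix (Fin N) (Fin T) ℝ) :
    projPhi R S X = X - (1 - R * Rᵀ) * X * (1 - S * Sᵀ) := by
  simp only [projPhi, Matrix.sub_mul, Matrix.mul_sub, Matrix.one_mul, Matrix.mul_one]
  abel

theorem frob_projPhi_le (hR : Rᵀ * R = 1) (hS : Sᵀ * S = 1) (X : Matrix (Fin N) (Fin T) ℝ) :
    frob (projPhi R S X) ≤ frob X := by
  have hsymm {n k : ℕ} (A : Matrix (Fin n) (Fin k) ℝ) : (1 - A * Aᵀ).IsSymm :=
    isSymm_one.sub (by rw [IsSymm, transpose_mul, transpose_transpose])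
  rw [projPhi_eq_sub, frob, frob, frobSq_eq_frobSq_sub_add_frobSq_of_isIdempotentElem
    (isIdempotentElem_mul_transpose hR).one_sub (hsymm R)
    (isIdempotentElem_mul_transpose hS).one_sub (hsymm S) X]
  exact Real.sqrt_le_sqrt (le_add_of_nonneg_right (frobSq_nonneg _))

theorem rank_projPhi_le (R : Matrix (Fin N) (Fin r) ℝ) (S : Matrix (Fin T) (Fin r) ℝ)
    (X : Matrix (Fin N) (Fin T) ℝ) : (projPhi R S X).rank ≤ 2 * r := by
  have hsplit : projPhi R S X = R * (Rᵀ * X) + (X - R * Rᵀ * X) * S * Sᵀ := by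
    simp only [projPhi, Matrix.sub_mul, Matrix.mul_assoc]
    abel
  rw [hsplit, two_mul]
  refine (rank_add_le _ _).trans (add_le_add ?_ ?_)
  · exact (rank_mul_le_left _ _).trans R.rank_le_width
  · exact (rank_mul_le_right _ _).trans (Sᵀ.rank_le_height)

theorem nuclearNorm_projPhi_le (hR : Rᵀ * R = 1) (hS : Sᵀ * S = 1)
    (X : Matrix (Fin N) (Fin T) ℝ) : nuclearNorm (projPhi R S X) ≤ √(2 * r) * frob X :=
  calc nuclearNorm (projPhi R S X) ≤ √(projPhi R S X).rank * frob (projPhi R S X) :=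
        nuclearNorm_le_sqrt_rank_mul_frob _
    _ ≤ √(2 * r) * frob X := by
      gcongr
      · exact Real.sqrt_nonneg _
      · exact_mod_cast rank_projPhi_le R S X
      · exact frob_projPhi_le hR hS X

end ProjPhi

theorem statement10_general {N T r : ℕ}
    (R : Matrix (Fin N) (Fin r) ℝ) (S : Matrix (Fin T) (Fin r) ℝ)
    (hR : Rᵀ * R = 1) (hS : Sᵀ * S = 1)
    (Δ : Matrix (Fin N) (Fin T) ℝ) (c : ℝ)
    (hcone : nuclearNorm Δ ≤ 4 * nuclearNorm (projPhi R S Δ) + c) :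
    (1 / (4 * Real.sqrt (3 * r))) * (nuclearNorm Δ - c) ≤ frob Δ
      ∧ frob Δ ≤ nuclearNorm Δ := by
  refine ⟨?_, frob_le_nuclearNorm Δ⟩
  have hP : nuclearNorm (projPhi R S Δ) ≤ √(3 * r) * frob Δ :=
    (nuclearNorm_projPhi_le hR hS Δ).trans
      (mul_le_mul_of_nonneg_right (by gcongr; norm_num) (Real.sqrt_nonneg _))
  rw [one_div_mul_eq_div]
  exact div_le_of_le_mul₀ (by positivity) (Real.sqrt_nonneg _) (by linarith)

/-- **Equation (9): equivalence of the nuclear and Frobenius norms on the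
restricted cone.** If `R, S` have orthonormal columns and `‖Δ‖_* ≤ 4‖P(Δ)‖_* + c`
with `c ≥ 0`, then `(1/(4√(3r)))(‖Δ‖_* − c) ≤ ‖Δ‖_F ≤ ‖Δ‖_*`. -/
theorem statement10 {N T r : ℕ} (hr : r ≤ min N T)
    (R : Matrix (Fin N) (Fin r) ℝ) (S : Matrix (Fin T) (Fin r) ℝ)
    (hR : Rᵀ * R = 1) (hS : Sᵀ * S = 1)
    (Δ : Matrix (Fin N) (Fin T) ℝ) (c : ℝ) (hc : 0 ≤ c)
    (hcone : nuclearNorm Δ ≤ 4 * nuclearNorm (projPhi R S Δ) + c) :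
    (1 / (4 * Real.sqrt (3 * r))) * (nuclearNorm Δ - c) ≤ frob Δ
      ∧ frob Δ ≤ nuclearNorm Δ :=
  statement10_general R S hR hS Δ c hcone

end
end

section
/- Let A, B ∈ ℝ^{N×T} satisfy A′B = 0 and AB′ = 0 (equivalently, the row spaces of A and B are orthogonal and the column spaces of A and B are orthogonal). Then the nuclear norm is additive: ‖A + B‖_* = ‖A‖_* + ‖B‖_*. -/
/-!
Writing `‖A‖_* = tr √(A′A)`, the hypotheses make the Gram matrix split as
`(A + B)′(A + B) = A′A + B′B` with `(A′A)(B′B) = 0`. Two positive semidefinite matrices with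
zero product have square roots with zero product, so `√(A′A) + √(B′B)` squares to `A′A + B′B`
and is therefore its square root; taking traces gives additivity.
-/

open Matrix

noncomputable section

open scoped MatrixOrder ComplexOrder

namespace Matrix

variable {m n 𝕜 : Type*} [RCLike 𝕜]

lemma conjTranspose_mul_self_add [Fintype m] {A B : Matrix m n 𝕜} (h : Aᴴ * B = 0) :
    (A + B)ᴴ * (A + B) = Aᴴ * A + Bᴴ * B := by
  have h' : Bᴴ * A = 0 := by simpa using congrArg (·ᴴ) h
  rw [conjTranspose_add, Matrix.add_mul, Matrix.mul_add, Matrix.mul_add, h, h', add_zero,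
    zero_add]

lemma conjTranspose_mul_self_mul_conjTranspose_mul_self [Fintype m] [Fintype n]
    {A B : Matrix m n 𝕜} (h : A * Bᴴ = 0) : (Aᴴ * A) * (Bᴴ * B) = 0 := by
  rw [Matrix.mul_assoc, ← Matrix.mul_assoc A, h, Matrix.zero_mul, Matrix.mul_zero]

lemma IsHermitian.mul_eq_zero_comm [Fintype n] {S T : Matrix n n 𝕜} (hS : S.IsHermitian)
    (hT : T.IsHermitian) (h : S * T = 0) : T * S = 0 := by
  simpa [hS.eq, hT.eq] using congrArg (·ᴴ) h

lemma IsHermitian.mul_eq_zero_of_mul_mul_self_eq_zero [Fintype n] {X : Matrix m n 𝕜}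
    {S : Matrix n n 𝕜} (hS : S.IsHermitian) (h : X * (S * S) = 0) : X * S = 0 :=
  (mul_self_mul_conjTranspose_eq_zero S X).mp (by rwa [hS.eq])

variable [Fintype n] [DecidableEq n]

lemma IsHermitian.trace_cfc {A : Matrix n n 𝕜} (hA : A.IsHermitian) (f : ℝ → ℝ) :
    (cfc f A).trace = ∑ i, (f (hA.eigenvalues i) : 𝕜) := by
  rw [hA.cfc_eq, IsHermitian.cfc, Unitary.conjStarAlgAut_apply, trace_mul_cycle,
    Unitary.coe_star_mul_self, one_mul, trace_diagonal]
  rfl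

lemma PosSemidef.trace_sqrt {A : Matrix n n 𝕜} (hA : A.PosSemidef) :
    (CFC.sqrt A).trace = ∑ i, (√(hA.isHermitian.eigenvalues i) : 𝕜) := by
  rw [CFC.sqrt_eq_real_sqrt A hA.nonneg, cfcₙ_eq_cfc, hA.isHermitian.trace_cfc]

lemma PosSemidef.sqrt_mul_sqrt_eq_zero {P Q : Matrix n n 𝕜} (hP : P.PosSemidef)
    (hQ : Q.PosSemidef) (h : P * Q = 0) : CFC.sqrt P * CFC.sqrt Q = 0 := by
  have hsP := (CFC.sqrt_nonneg P).posSemidef.isHermitian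
  have hsQ := (CFC.sqrt_nonneg Q).posSemidef.isHermitian
  have hP_sQ : P * CFC.sqrt Q = 0 :=
    hsQ.mul_eq_zero_of_mul_mul_self_eq_zero (by rwa [CFC.sqrt_mul_sqrt_self Q hQ.nonneg])
  have hsQ_sP : CFC.sqrt Q * CFC.sqrt P = 0 :=
    hsP.mul_eq_zero_of_mul_mul_self_eq_zero (by
      rw [CFC.sqrt_mul_sqrt_self P hP.nonneg]
      exact hP.isHermitian.mul_eq_zero_comm hsQ hP_sQ)
  exact hsQ.mul_eq_zero_comm hsP hsQ_sP

lemma PosSemidef.sqrt_add_of_mul_eq_zero {P Q : Matrix n n 𝕜} (hP : P.PosSemidef)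
    (hQ : Q.PosSemidef) (h : P * Q = 0) :
    CFC.sqrt (P + Q) = CFC.sqrt P + CFC.sqrt Q := by
  have hsPQ := hP.sqrt_mul_sqrt_eq_zero hQ h
  have hsQP := (CFC.sqrt_nonneg P).posSemidef.isHermitian.mul_eq_zero_comm
    (CFC.sqrt_nonneg Q).posSemidef.isHermitian hsPQ
  refine CFC.sqrt_unique ?_ (add_nonneg (CFC.sqrt_nonneg P) (CFC.sqrt_nonneg Q))
  rw [add_mul, mul_add, mul_add, CFC.sqrt_mul_sqrt_self P hP.nonneg,
    CFC.sqrt_mul_sqrt_self Q hQ.nonneg, hsPQ, hsQP, add_zero, zero_add]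

end Matrix

lemma nuclearNorm_eq_trace_sqrt {N T : ℕ} (A : Matrix (Fin N) (Fin T) ℝ) :
    nuclearNorm A = (CFC.sqrt (Aᴴ * A)).trace := by
  rw [(posSemidef_conjTranspose_mul_self A).trace_sqrt]
  rfl

/-- **Additivity of the nuclear norm under orthogonality.** If `A′B = 0` and
`AB′ = 0` (the row spaces of `A` and `B` are orthogonal and the column spaces of
`A` and `B` are orthogonal), then `‖A + B‖_* = ‖A‖_* + ‖B‖_*`. -/
theorem statement12 {N T : ℕ} (A B : Matrix (Fin N) (Fin T) ℝ)
    (h₁ : Aᵀ * B = 0) (h₂ : A * Bᵀ = 0) :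
    nuclearNorm (A + B) = nuclearNorm A + nuclearNorm B := by
  rw [← conjTranspose_eq_transpose_of_trivial] at h₁ h₂
  rw [nuclearNorm_eq_trace_sqrt, nuclearNorm_eq_trace_sqrt, nuclearNorm_eq_trace_sqrt,
    conjTranspose_mul_self_add h₁,
    (posSemidef_conjTranspose_mul_self A).sqrt_add_of_mul_eq_zero
      (posSemidef_conjTranspose_mul_self B)
      (conjTranspose_mul_self_mul_conjTranspose_mul_self h₂),
    trace_add]

end
end
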